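/- Let τ ⊆ γ be faces of a polyhedral cone σ ⊆ R^d. Then the dual of the quotient cone γ/τ := (γ + span(τ))/span(τ), computed inside its own span, is canonically isomorphic (as a cone) to the quotient τ*/γ* of complementary faces of σ^∨: (γ/τ)^∨ ≅ (τ^⊥ ∩ σ^∨ + γ^⊥)/γ^⊥, where τ* = τ^⊥ ∩ σ^∨ and γ* = γ^⊥ ∩ σ^∨. -/

import Mathlib

open scoped Pointwise

/-- The dual cone of a set `S` in Euclidean space. -/
def dualSet {d : ℕ} (S : Set (EuclideanSpace ℝ (Fin d))) : Set (EuclideanSpace ℝ (Fin d)) :=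
  {y | ∀ x ∈ S, 0 ≤ (inner ℝ y x : ℝ)}

/-- The annihilator `S^⊥` of a set `S`. -/
def perpSet {d : ℕ} (S : Set (EuclideanSpace ℝ (Fin d))) : Set (EuclideanSpace ℝ (Fin d)) :=
  {y | ∀ x ∈ S, (inner ℝ y x : ℝ) = 0}

/-- `σ` is a polyhedral cone. -/
def IsPolyCone {d : ℕ} (σ : Set (EuclideanSpace ℝ (Fin d))) : Prop :=
  ∃ (m : ℕ) (g : Fin m → EuclideanSpace ℝ (Fin d)),
    σ = {x | ∃ c : Fin m → ℝ, (∀ i, 0 ≤ c i) ∧ x = ∑ i, c i • g i}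

/-- `γ` is a face of `σ`. -/
def IsFaceOf {d : ℕ} (σ γ : Set (EuclideanSpace ℝ (Fin d))) : Prop :=
  ∃ u ∈ dualSet σ, γ = σ ∩ {x | (inner ℝ u x : ℝ) = 0}

/-! A functional `φ` on `ℝ^d / span τ` is the same as a vector `v ∈ τ^⊥`, namely the vector
representing `φ ∘ mkQ`. Under this identification `φ` vanishes on the image of `γ` iff `v ∈ γ^⊥`,
and `φ` is nonnegative there iff `v ∈ γ^∨`. Hence `v ↦ v mod γ^⊥` induces an injective linear map
on the dual of `γ/τ` modulo its annihilator, carrying the dual cone onto the image of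
`γ^∨ ∩ τ^⊥`. It remains that `γ^∨ ∩ τ^⊥ = τ* + γ^⊥` for a face `γ = σ ∩ u^⊥` of the polyhedral
cone `σ`: a `v` nonnegative on `γ` becomes nonnegative on the finitely many generators of `σ`,
hence on `σ`, after adding a large multiple of `u`, and that multiple lies in `γ^⊥`. -/

open Submodule Filter RealInnerProductSpace

section QuotientDual

variable {E : Type*} [NormedAddCommGroup E] [InnerProductSpace ℝ E]

lemma mem_orthogonal_span_iff {S : Set E} {v : E} : v ∈ (span ℝ S)ᗮ ↔ ∀ x ∈ S, ⟪v, x⟫ = 0 :=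
  ⟨fun h x hx => (mem_orthogonal' _ v).mp h x (subset_span hx), fun h =>
    (mem_orthogonal' _ v).mpr fun _ hu => (span_le (p := LinearMap.ker (innerₗ E v))).mpr h hu⟩

lemma nondegenerate_innerₗ : (innerₗ E).Nondegenerate :=
  ⟨fun x hx => inner_self_eq_zero.mp (hx x), fun y hy => inner_self_eq_zero.mp (hy y)⟩

variable [FiniteDimensional ℝ E]

noncomputable def dualQuotRepr (W : Submodule ℝ E) : Module.Dual ℝ (E ⧸ W) →ₗ[ℝ] E :=
  (LinearMap.BilinForm.toDual (innerₗ E) nondegenerate_innerₗ).symm.toLinearMap ∘ₗ W.mkQ.dualMap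

@[simp]
lemma inner_dualQuotRepr (W : Submodule ℝ E) (φ : Module.Dual ℝ (E ⧸ W)) (x : E) :
    ⟪dualQuotRepr W φ, x⟫ = φ (W.mkQ x) :=
  LinearMap.BilinForm.apply_toDual_symm_apply (hB := nondegenerate_innerₗ) _ x

lemma range_dualQuotRepr (W : Submodule ℝ E) : LinearMap.range (dualQuotRepr W) = Wᗮ := by
  apply le_antisymm
  · rintro _ ⟨φ, rfl⟩
    refine (mem_orthogonal' W _).mpr fun u hu => ?_
    rw [inner_dualQuotRepr, mkQ_apply, (Quotient.mk_eq_zero W).mpr hu, map_zero]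
  · intro v hv
    have hW : W ≤ LinearMap.ker (innerₗ E v) := fun u hu => (mem_orthogonal' W v).mp hv u hu
    refine ⟨W.liftQ (innerₗ E v) hW, ext_inner_right ℝ fun x => ?_⟩
    simp

lemma ker_mkQ_comp_dualQuotRepr (W : Submodule ℝ E) (S : Set E) :
    LinearMap.ker ((span ℝ S)ᗮ.mkQ ∘ₗ dualQuotRepr W) = (span ℝ (W.mkQ '' S)).dualAnnihilator := by
  ext φ
  rw [LinearMap.mem_ker, LinearMap.comp_apply, mkQ_apply, Quotient.mk_eq_zero,
    mem_orthogonal_span_iff, ← SetLike.mem_coe, coe_dualAnnihilator_span, Set.mem_ofPred_eq,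
    Set.image_subset_iff]
  simp [Set.subset_def]

lemma image_dualQuotRepr_dualCone (W : Submodule ℝ E) (S : Set E) :
    dualQuotRepr W '' {φ | ∀ c ∈ W.mkQ '' S, 0 ≤ φ c} = {v | ∀ x ∈ S, 0 ≤ ⟪v, x⟫} ∩ Wᗮ := by
  rw [← range_dualQuotRepr]
  ext v
  constructor
  · rintro ⟨φ, hφ, rfl⟩
    exact ⟨fun x hx => by simpa using hφ _ ⟨x, hx, rfl⟩, LinearMap.mem_range_self _ φ⟩
  · rintro ⟨hv, ⟨φ, rfl⟩⟩
    exact ⟨φ, by rintro _ ⟨x, hx, rfl⟩; simpa using hv x hx, rfl⟩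

end QuotientDual

section Cones

variable {d : ℕ}

lemma perpSet_eq_orthogonal_span (S : Set (EuclideanSpace ℝ (Fin d))) :
    perpSet S = (span ℝ S)ᗮ := by
  ext v
  exact mem_orthogonal_span_iff.symm

lemma image_dualQuotRepr_eq_dualSet_inter_perpSet (τ γ : Set (EuclideanSpace ℝ (Fin d))) :
    dualQuotRepr (span ℝ τ) '' {φ | ∀ c ∈ (span ℝ τ).mkQ '' γ, 0 ≤ φ c} =
      dualSet γ ∩ perpSet τ := by
  rw [image_dualQuotRepr_dualCone, perpSet_eq_orthogonal_span]
  rfl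

def genCone {m : ℕ} (g : Fin m → EuclideanSpace ℝ (Fin d)) : Set (EuclideanSpace ℝ (Fin d)) :=
  {x | ∃ c : Fin m → ℝ, (∀ i, 0 ≤ c i) ∧ x = ∑ i, c i • g i}

lemma generator_mem_genCone {m : ℕ} (g : Fin m → EuclideanSpace ℝ (Fin d)) (i : Fin m) :
    g i ∈ genCone g :=
  ⟨Pi.single i 1, fun j => by by_cases h : j = i <;> simp [h], by simp [Pi.single_apply]⟩

lemma mem_dualSet_genCone_iff {m : ℕ} (g : Fin m → EuclideanSpace ℝ (Fin d))
    (y : EuclideanSpace ℝ (Fin d)) : y ∈ dualSet (genCone g) ↔ ∀ i, 0 ≤ ⟪y, g i⟫ := by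
  refine ⟨fun hy i => hy (g i) (generator_mem_genCone g i), ?_⟩
  rintro hy _ ⟨c, hc, rfl⟩
  rw [inner_sum]
  exact Finset.sum_nonneg fun i _ => by rw [real_inner_smul_right]; exact mul_nonneg (hc i) (hy i)

/-- On each generator `g i` of `σ`, either `⟪u, g i⟫ > 0`, or `g i` lies in the face. -/
lemma exists_add_smul_mem_dualSet {σ : Set (EuclideanSpace ℝ (Fin d))} (hσ : IsPolyCone σ)
    {u v : EuclideanSpace ℝ (Fin d)} (hu : u ∈ dualSet σ)
    (hv : v ∈ dualSet (σ ∩ {x | ⟪u, x⟫ = 0})) :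
    ∃ c : ℝ, v + c • u ∈ dualSet σ := by
  obtain ⟨m, g, rfl : σ = genCone g⟩ := hσ
  rw [mem_dualSet_genCone_iff] at hu
  simp_rw [mem_dualSet_genCone_iff, inner_add_left, real_inner_smul_left]
  have hgen : ∀ i, ∀ᶠ c : ℝ in atTop, 0 ≤ ⟪v, g i⟫ + c * ⟪u, g i⟫ := by
    intro i
    rcases (hu i).eq_or_lt with hface | hpos
    · exact Eventually.of_forall fun c => by
        simpa [← hface] using hv (g i) ⟨generator_mem_genCone g i, hface.symm⟩
    · have hlin := tendsto_atTop_add_const_left atTop ⟪v, g i⟫ (tendsto_id.atTop_mul_const hpos)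
      exact hlin.eventually_ge_atTop 0
  exact (eventually_all.mpr hgen).exists

lemma dualSet_inter_perpSet_of_isFaceOf {σ τ γ : Set (EuclideanSpace ℝ (Fin d))} (hσ : IsPolyCone σ)
    (hγ : IsFaceOf σ γ) (hτγ : τ ⊆ γ) :
    dualSet γ ∩ perpSet τ = dualSet σ ∩ perpSet τ + perpSet γ := by
  obtain ⟨u, hu, rfl⟩ := hγ
  apply le_antisymm
  · rintro v ⟨hvγ, hvτ⟩
    obtain ⟨c, hc⟩ := exists_add_smul_mem_dualSet hσ hu hvγ
    refine ⟨v + c • u, ⟨hc, fun x hx => ?_⟩, -(c • u), fun x hx => ?_, add_neg_cancel_right v _⟩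
    · rw [inner_add_left, real_inner_smul_left, hvτ x hx, (hτγ hx).2, mul_zero, add_zero]
    · rw [inner_neg_left, real_inner_smul_left, hx.2, mul_zero, neg_zero]
  · rintro _ ⟨w, ⟨hwσ, hwτ⟩, p, hp, rfl⟩
    refine ⟨fun x hx => ?_, fun x hx => ?_⟩
    · rw [inner_add_left, hp x hx, add_zero]
      exact hwσ x hx.1
    · rw [inner_add_left, hp x (hτγ hx), hwτ x hx, add_zero]

end Cones

theorem quotient_cone_dual_iso_general {d : ℕ} (σ τ γ : Set (EuclideanSpace ℝ (Fin d)))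
    (hσ : IsPolyCone σ) (hγ : IsFaceOf σ γ) (hτγ : τ ⊆ γ) :
    ∃ e : (Module.Dual ℝ (EuclideanSpace ℝ (Fin d) ⧸ Submodule.span ℝ τ) ⧸
        (Submodule.span ℝ ((Submodule.span ℝ τ).mkQ '' γ)).dualAnnihilator) →ₗ[ℝ]
        (EuclideanSpace ℝ (Fin d) ⧸ (Submodule.span ℝ γ)ᗮ),
      Function.Injective e ∧
      e '' ((Submodule.span ℝ ((Submodule.span ℝ τ).mkQ '' γ)).dualAnnihilator.mkQ ''
          {φ : Module.Dual ℝ (EuclideanSpace ℝ (Fin d) ⧸ Submodule.span ℝ τ) |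
            ∀ c ∈ (Submodule.span ℝ τ).mkQ '' γ, 0 ≤ φ c}) =
        ((Submodule.span ℝ γ)ᗮ).mkQ '' (dualSet σ ∩ perpSet τ + perpSet γ) := by
  have hker := ker_mkQ_comp_dualQuotRepr (span ℝ τ) γ
  refine ⟨_, LinearMap.ker_eq_bot.mp (ker_liftQ_eq_bot' _ _ hker.symm), ?_⟩
  rw [Set.image_image, ← dualSet_inter_perpSet_of_isFaceOf hσ hγ hτγ,
    ← image_dualQuotRepr_eq_dualSet_inter_perpSet, Set.image_image]
  rfl

/-- Let `τ ⊆ γ` be faces of a polyhedral cone `σ ⊆ ℝ^d`.  The dual of the quotient cone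
`γ/τ = (γ + span τ)/span τ`, computed inside its own span (i.e. modulo the functionals
vanishing on `γ/τ`), is canonically isomorphic as a cone to the quotient
`τ*/γ* = (τ^⊥ ∩ σ^∨ + γ^⊥)/γ^⊥` of complementary faces of `σ^∨`:  there is an injective
linear map carrying the one cone bijectively onto the other. -/
theorem quotient_cone_dual_iso {d : ℕ} (σ τ γ : Set (EuclideanSpace ℝ (Fin d)))
    (hσ : IsPolyCone σ) (hτ : IsFaceOf σ τ) (hγ : IsFaceOf σ γ) (hτγ : τ ⊆ γ) :
    ∃ e : (Module.Dual ℝ (EuclideanSpace ℝ (Fin d) ⧸ Submodule.span ℝ τ) ⧸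
        (Submodule.span ℝ ((Submodule.span ℝ τ).mkQ '' γ)).dualAnnihilator) →ₗ[ℝ]
        (EuclideanSpace ℝ (Fin d) ⧸ (Submodule.span ℝ γ)ᗮ),
      Function.Injective e ∧
      e '' ((Submodule.span ℝ ((Submodule.span ℝ τ).mkQ '' γ)).dualAnnihilator.mkQ ''
          {φ : Module.Dual ℝ (EuclideanSpace ℝ (Fin d) ⧸ Submodule.span ℝ τ) |
            ∀ c ∈ (Submodule.span ℝ τ).mkQ '' γ, 0 ≤ φ c}) =
        ((Submodule.span ℝ γ)ᗮ).mkQ '' (dualSet σ ∩ perpSet τ + perpSet γ) :=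
  quotient_cone_dual_iso_general σ τ γ hσ hγ hτγ
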